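/- If a polyhedron K embeds piecewise-linearly into ℝ^d with d > 0, then K × S¹ embeds piecewise-linearly into ℝ^{d+1}. -/

import Mathlib

open Set

noncomputable section

/-- The point of `ℝ^V` corresponding to a vertex `v` of a graph. -/
def vert {V : Type*} [DecidableEq V] (v : V) : V → ℝ := fun i => if i = v then 1 else 0

/-- Geometric realization of a simple graph as a subset of `ℝ^V`:
the union of the straight segments joining the standard points of adjacent vertices. -/
def graphRealization {V : Type*} [DecidableEq V] (G : SimpleGraph V) : Set (V → ℝ) :=
  ⋃ p : {p : V × V // G.Adj p.1 p.2}, segment ℝ (vert p.1.1) (vert p.1.2)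

/-- A (compact) polyhedron: a finite union of polytopes (convex hulls of finite sets). -/
def IsPolyhedron {E : Type*} [AddCommGroup E] [Module ℝ E] (s : Set E) : Prop :=
  ∃ T : Set (Set E), T.Finite ∧ (∀ P ∈ T, ∃ Q : Set E, Q.Finite ∧ P = convexHull ℝ Q) ∧
    s = ⋃₀ T

/-- `f` is piecewise linear (PL) on `s`: there is a finite family of polytopes covering `s`
on each of which `f` coincides with an affine map. -/
def IsPLOn {E F : Type*} [AddCommGroup E] [Module ℝ E] [AddCommGroup F] [Module ℝ F]
    (f : E → F) (s : Set E) : Prop :=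
  ∃ T : Set (Set E), T.Finite ∧ (∀ P ∈ T, ∃ Q : Set E, Q.Finite ∧ P = convexHull ℝ Q) ∧
    s ⊆ ⋃₀ T ∧ ∀ P ∈ T, ∃ g : E →ᵃ[ℝ] F, EqOn f g (P ∩ s)

/-- The cone over a set `A` with apex `p` (union of segments from `p` to points of `A`). -/
def coneFrom {E : Type*} [AddCommGroup E] [Module ℝ E] (p : E) (A : Set E) : Set E :=
  ⋃ x ∈ A, segment ℝ p x

/-- A PL circle: the boundary of the unit square in `ℝ²`. -/
def plCircle : Set (ℝ × ℝ) := {y | |y.1| ⊔ |y.2| = 1}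

/-!
Rescale the first coordinate of the embedding `f` to a number `t x ∈ [1, 2]` and send `(x, y)` to
`(stretch t y₁, stretch t y₂, f₁ x, …, fₙ x)`, where `stretch t` is an increasing PL map of
`[-1, 1]` onto `[-t, t]`. For `y` on the boundary of the unit square, `(stretch t y₁, stretch t y₂)`
lies on the boundary of the square of radius `t`: its sup-norm recovers `t`, hence `f x` and `x`,
and monotonicity of `stretch t` recovers `y`. The map is PL because `stretch t s` is the minimum
of two affine functions of `(t, s)`, each active on a slab around the graph of the affine function
`s = 2 t - 3`.
-/

section Polytope

variable {E F : Type*} [AddCommGroup E] [Module ℝ E] [AddCommGroup F] [Module ℝ F]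

def IsPolytope (P : Set E) : Prop := ∃ Q : Set E, Q.Finite ∧ P = convexHull ℝ Q

theorem IsPolytope.image {P : Set E} (hP : IsPolytope P) (A : E →ᵃ[ℝ] F) :
    IsPolytope (A '' P) := by
  obtain ⟨Q, hQ, rfl⟩ := hP
  exact ⟨A '' Q, hQ.image A, A.image_convexHull Q⟩

theorem IsPolytope.prod {P : Set E} {P' : Set F} (hP : IsPolytope P) (hP' : IsPolytope P') :
    IsPolytope (P ×ˢ P') := by
  obtain ⟨Q, hQ, rfl⟩ := hP
  obtain ⟨Q', hQ', rfl⟩ := hP'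
  exact ⟨Q ×ˢ Q', hQ.prod hQ', (convexHull_prod Q Q').symm⟩

theorem isPolytope_Icc {a b : ℝ} (hab : a ≤ b) : IsPolytope (Icc a b) :=
  ⟨{a, b}, toFinite _, by rw [convexHull_pair, segment_eq_Icc hab]⟩

theorem IsPolytope.isBounded {E : Type*} [NormedAddCommGroup E] [NormedSpace ℝ E] {P : Set E}
    (hP : IsPolytope P) : Bornology.IsBounded P := by
  obtain ⟨Q, hQ, rfl⟩ := hP
  exact (hQ.isCompact_convexHull ℝ).isBounded

end Polytope

namespace IsPLOn

variable {E F G : Type*} [AddCommGroup E] [Module ℝ E] [AddCommGroup F] [Module ℝ F]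
  [AddCommGroup G] [Module ℝ G] {f : E → F} {s : Set E}

theorem affineMap_comp (hf : IsPLOn f s) (B : F →ᵃ[ℝ] G) : IsPLOn (B ∘ f) s := by
  obtain ⟨T, hT, hpoly, hcover, haff⟩ := hf
  refine ⟨T, hT, hpoly, hcover, fun P hP => ?_⟩
  obtain ⟨A, hA⟩ := haff P hP
  exact ⟨B.comp A, fun x hx => congrArg B (hA hx)⟩

theorem isBounded_image {F : Type*} [NormedAddCommGroup F] [NormedSpace ℝ F] {f : E → F}
    (hf : IsPLOn f s) : Bornology.IsBounded (f '' s) := by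
  obtain ⟨T, hT, hpoly, hcover, haff⟩ := hf
  choose! A hA using haff
  refine ((Bornology.isBounded_biUnion hT).2
    fun P hP => (IsPolytope.image (hpoly P hP) (A P)).isBounded).subset ?_
  rintro _ ⟨x, hx, rfl⟩
  obtain ⟨P, hP, hxP⟩ := mem_sUnion.1 (hcover hx)
  exact mem_biUnion hP ⟨x, hxP, (hA P hP ⟨hxP, hx⟩).symm⟩

theorem comp_prodMap_of_affine_on_slabs {V Y Z : Type*} [AddCommGroup V] [Module ℝ V]
    [AddCommGroup Y] [Module ℝ Y] [AddCommGroup Z] [Module ℝ Z] {f : E → V} {K : Set E}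
    (hf : IsPLOn f K) {S : V × Y → Z} (c : V →ᵃ[ℝ] Y) {𝓑 : Set (Set Y)} (h𝓑 : 𝓑.Finite)
    (h𝓑poly : ∀ B ∈ 𝓑, IsPolytope B)
    (hS : ∀ B ∈ 𝓑, ∃ M : V × Y →ᵃ[ℝ] Z, EqOn S M {p | p.2 - c p.1 ∈ B})
    {D : Set Y} (hD : ∀ x ∈ K, ∀ y ∈ D, y - c (f x) ∈ ⋃₀ 𝓑) :
    IsPLOn (S ∘ Prod.map f id) (K ×ˢ D) := by
  -- Over an affine piece `A P` of `f`, the slab `{p | p.2 - c p.1 ∈ B}` pulls back to the image of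
  -- `P ×ˢ B` under a shear, so no polytope ever has to be cut.
  obtain ⟨T, hT, hTpoly, hTcover, hTaff⟩ := hf
  choose! A hA using hTaff
  choose! M hM using hS
  let shear (P : Set E) : E × Y →ᵃ[ℝ] E × Y :=
    AffineMap.fst.prod (AffineMap.snd + (c.comp (A P)).comp AffineMap.fst)
  refine ⟨image2 (fun P B => shear P '' (P ×ˢ B)) T 𝓑, hT.image2 _ h𝓑, ?_, ?_, ?_⟩
  · rintro _ ⟨P, hP, B, hB, rfl⟩
    exact (IsPolytope.prod (hTpoly P hP) (h𝓑poly B hB)).image _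
  · rintro ⟨x, y⟩ ⟨hx, hy⟩
    obtain ⟨P, hP, hxP⟩ := mem_sUnion.1 (hTcover hx)
    obtain ⟨B, hB, hyB⟩ := mem_sUnion.1 (hD x hx y hy)
    refine mem_sUnion.2 ⟨_, mem_image2_of_mem hP hB, (x, y - c (f x)), ⟨hxP, hyB⟩, ?_⟩
    simp [shear, hA P hP ⟨hxP, hx⟩]
  · rintro _ ⟨P, hP, B, hB, rfl⟩
    refine ⟨(M B).comp ((A P).prodMap (AffineMap.id ℝ Y)), ?_⟩
    rintro _ ⟨⟨⟨x, ρ⟩, ⟨hxP, hρ⟩, rfl⟩, hxK, -⟩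
    simp only [shear, AffineMap.prod_apply, AffineMap.coe_fst, AffineMap.coe_add,
      AffineMap.coe_snd, AffineMap.coe_comp, Pi.add_apply, Function.comp_apply] at hxK ⊢
    rw [Prod.map_apply, hA P hP ⟨hxP, hxK⟩]
    exact hM B hB (by simpa using hρ)

end IsPLOn

-- For `t ∈ [1, 2]` this maps `[-1, 1]` increasingly onto `[-t, t]`; unlike `t * s`, it is
-- piecewise linear in `(t, s)` jointly.
def stretch (t s : ℝ) : ℝ := min (t + s - 1) (2 * s - t + 2)

theorem stretch_strictMono (t : ℝ) : StrictMono (stretch t) := fun _ _ hab =>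
  min_lt_min (by linarith) (by linarith)

theorem stretch_eq_of_le {t s : ℝ} (h : 2 * t - 3 ≤ s) : stretch t s = t + s - 1 :=
  min_eq_left (by linarith)

theorem stretch_eq_of_ge {t s : ℝ} (h : s ≤ 2 * t - 3) : stretch t s = 2 * s - t + 2 :=
  min_eq_right (by linarith)

theorem stretch_one {t : ℝ} (ht : t ≤ 2) : stretch t 1 = t := by
  rw [stretch_eq_of_le (by linarith)]; ring

theorem stretch_neg_one {t : ℝ} (ht : 1 ≤ t) : stretch t (-1) = -t := by
  rw [stretch_eq_of_ge (by linarith)]; ring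

theorem abs_stretch_le {t s : ℝ} (ht : t ∈ Icc 1 2) (hs : |s| ≤ 1) : |stretch t s| ≤ t := by
  obtain ⟨hs₁, hs₂⟩ := abs_le.1 hs
  have h₁ := (stretch_strictMono t).monotone hs₁
  have h₂ := (stretch_strictMono t).monotone hs₂
  rw [stretch_neg_one ht.1] at h₁
  rw [stretch_one ht.2] at h₂
  exact abs_le.2 ⟨h₁, h₂⟩

theorem abs_stretch_of_abs_eq_one {t s : ℝ} (ht : t ∈ Icc 1 2) (hs : |s| = 1) :
    |stretch t s| = t := by
  rcases (abs_eq zero_le_one).1 hs with rfl | rfl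
  · rw [stretch_one ht.2, abs_of_nonneg (by linarith [ht.1])]
  · rw [stretch_neg_one ht.1, abs_neg, abs_of_nonneg (by linarith [ht.1])]

theorem sup_abs_stretch {t : ℝ} (ht : t ∈ Icc 1 2) {y : ℝ × ℝ} (hy : y ∈ plCircle) :
    |stretch t y.1| ⊔ |stretch t y.2| = t := by
  have hy : |y.1| ⊔ |y.2| = 1 := hy
  have h₁ : |y.1| ≤ 1 := hy ▸ le_sup_left
  have h₂ : |y.2| ≤ 1 := hy ▸ le_sup_right
  rcases max_choice |y.1| |y.2| with h | h <;> rw [h] at hy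
  · rw [abs_stretch_of_abs_eq_one ht hy, sup_eq_left.2 (abs_stretch_le ht h₂)]
  · rw [abs_stretch_of_abs_eq_one ht hy, sup_eq_right.2 (abs_stretch_le ht h₁)]

theorem exists_affineMap_eq_stretch {I : Set ℝ}
    (hI : I ∈ ({Icc 0 2, Icc (-2) 0} : Set (Set ℝ))) :
    ∃ β : ℝ × ℝ →ᵃ[ℝ] ℝ, ∀ t s, s - (2 * t - 3) ∈ I → stretch t s = β (t, s) := by
  rcases hI with rfl | rfl
  · refine ⟨AffineMap.fst + AffineMap.snd - AffineMap.const ℝ _ 1, fun t s hs => ?_⟩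
    simp [stretch_eq_of_le (sub_nonneg.1 hs.1)]
  · refine ⟨2 • AffineMap.snd - AffineMap.fst + AffineMap.const ℝ _ 2, fun t s hs => ?_⟩
    simp [stretch_eq_of_ge (sub_nonpos.1 hs.2)]

section Spin

variable {W : Type*}

def spin (p : (ℝ × W) × (ℝ × ℝ)) : ℝ × ℝ × W :=
  (stretch p.1.1 p.2.1, stretch p.1.1 p.2.2, p.1.2)

theorem spin_injOn : InjOn (spin (W := W)) ({v | v.1 ∈ Icc 1 2} ×ˢ plCircle) := by
  rintro ⟨⟨t, w⟩, y⟩ ⟨ht, hy⟩ ⟨⟨t', w'⟩, y'⟩ ⟨ht', hy'⟩ h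
  simp only [spin, Prod.mk.injEq] at h
  obtain ⟨h₁, h₂, rfl⟩ := h
  obtain rfl : t = t' := by
    rw [← sup_abs_stretch (t := t) ht hy, ← sup_abs_stretch (t := t') ht' hy', h₁, h₂]
  rw [Prod.ext ((stretch_strictMono t).injective h₁) ((stretch_strictMono t).injective h₂)]

theorem isPLOn_spin_comp_prodMap [AddCommGroup W] [Module ℝ W] {E : Type*} [AddCommGroup E]
    [Module ℝ E] {F : E → ℝ × W} {K : Set E} (hF : IsPLOn F K) (hFK : ∀ x ∈ K, (F x).1 ∈ Icc 1 2) :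
    IsPLOn (spin ∘ Prod.map F id) (K ×ˢ plCircle) := by
  let a : ℝ × W →ᵃ[ℝ] ℝ := (2 : ℝ) • AffineMap.fst - AffineMap.const ℝ _ 3
  let 𝓘 : Set (Set ℝ) := {Icc 0 2, Icc (-2) 0}
  have h𝓘 : ∀ r ∈ Icc (-2 : ℝ) 2, ∃ I ∈ 𝓘, r ∈ I := fun r hr =>
    (le_total 0 r).elim (fun h => ⟨_, Or.inl rfl, h, hr.2⟩)
      (fun h => ⟨_, Or.inr rfl, hr.1, h⟩)
  refine hF.comp_prodMap_of_affine_on_slabs (a.prod a)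
    ((toFinite 𝓘).image2 (· ×ˢ ·) (toFinite 𝓘)) ?_ ?_ ?_
  · have h𝓘poly : ∀ I ∈ 𝓘, IsPolytope I := by
      rintro _ (rfl | rfl) <;> exact isPolytope_Icc (by norm_num)
    rintro _ ⟨I, hI, J, hJ, rfl⟩
    exact (h𝓘poly I hI).prod (h𝓘poly J hJ)
  · rintro _ ⟨I, hI, J, hJ, rfl⟩
    obtain ⟨β, hβ⟩ := exists_affineMap_eq_stretch hI
    obtain ⟨γ, hγ⟩ := exists_affineMap_eq_stretch hJ
    let πt : (ℝ × W) × (ℝ × ℝ) →ᵃ[ℝ] ℝ := AffineMap.fst.comp AffineMap.fst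
    let πw : (ℝ × W) × (ℝ × ℝ) →ᵃ[ℝ] W := AffineMap.snd.comp AffineMap.fst
    let πy₁ : (ℝ × W) × (ℝ × ℝ) →ᵃ[ℝ] ℝ := AffineMap.fst.comp AffineMap.snd
    let πy₂ : (ℝ × W) × (ℝ × ℝ) →ᵃ[ℝ] ℝ := AffineMap.snd.comp AffineMap.snd
    refine ⟨(β.comp (πt.prod πy₁)).prod ((γ.comp (πt.prod πy₂)).prod πw), ?_⟩
    rintro ⟨⟨t, w⟩, y⟩ ⟨h₁, h₂⟩
    simp only [a, AffineMap.prod_apply, AffineMap.coe_sub, AffineMap.coe_smul, AffineMap.coe_fst,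
      AffineMap.coe_const, Pi.sub_apply, Pi.smul_apply, Function.const_apply, smul_eq_mul,
      Prod.fst_sub, Prod.snd_sub] at h₁ h₂
    simp [spin, πt, πw, πy₁, πy₂, hβ t y.1 h₁, hγ t y.2 h₂]
  · intro x hx y hy
    have hy : |y.1| ⊔ |y.2| = 1 := hy
    have ht := hFK x hx
    have hr : ∀ s, |s| ≤ 1 → s - (2 * (F x).1 - 3) ∈ Icc (-2 : ℝ) 2 := fun s hs =>
      ⟨by linarith [(abs_le.1 hs).1, ht.2], by linarith [(abs_le.1 hs).2, ht.1]⟩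
    obtain ⟨I, hI, h₁⟩ := h𝓘 _ (hr y.1 (hy ▸ le_sup_left))
    obtain ⟨J, hJ, h₂⟩ := h𝓘 _ (hr y.2 (hy ▸ le_sup_right))
    exact ⟨I ×ˢ J, mem_image2_of_mem hI hJ, by simpa [a] using ⟨h₁, h₂⟩⟩

end Spin

theorem IsPLOn.exists_injective_affineMap_fst_mem_Icc {E : Type*} [AddCommGroup E]
    [Module ℝ E] {n : ℕ} {f : E → Fin (n + 1) → ℝ} {K : Set E} (hf : IsPLOn f K) :
    ∃ A : (Fin (n + 1) → ℝ) →ᵃ[ℝ] ℝ × (Fin n → ℝ),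
      Function.Injective A ∧ ∀ x ∈ K, (A (f x)).1 ∈ Icc 1 2 := by
  obtain ⟨C, hC⟩ := isBounded_iff_forall_norm_le.1 hf.isBounded_image
  set ε : ℝ := (2 * (|C| + 1))⁻¹
  have hε : 0 < ε := by positivity
  have hεf : ∀ x ∈ K, |ε * f x 0| ≤ 1 / 2 := fun x hx => calc
    |ε * f x 0| = ε * |f x 0| := by rw [abs_mul, abs_of_pos hε]
    _ ≤ ε * (|C| + 1) := by
      gcongr
      linarith [norm_le_pi_norm (f x) 0, hC _ (mem_image_of_mem f hx), le_abs_self C,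
        Real.norm_eq_abs (f x 0)]
    _ = 1 / 2 := by simp only [ε]; field_simp
  let τ : ℝ →ᵃ[ℝ] ℝ := AffineMap.const ℝ ℝ (3 / 2) + ε • AffineMap.id ℝ ℝ
  refine ⟨(τ.prodMap (AffineMap.id ℝ _)).comp
    (Fin.consLinearEquiv ℝ fun _ => ℝ).symm.toLinearMap.toAffineMap, ?_, fun x hx => ?_⟩
  · rw [AffineMap.coe_comp]
    refine Function.Injective.comp ?_ (LinearEquiv.injective _)
    rintro ⟨r, w⟩ ⟨r', w'⟩ h
    simpa [τ, hε.ne'] using h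
  · have := abs_le.1 (hεf x hx)
    simp only [AffineMap.coe_comp, Function.comp_apply, AffineMap.prodMap_apply]
    constructor <;> simp [τ] <;> linarith

theorem prod_circle_embeds_general {m d : ℕ} (hd : 0 < d) (K : Set (Fin m → ℝ))
    (h : ∃ f : (Fin m → ℝ) → (Fin d → ℝ), IsPLOn f K ∧ InjOn f K) :
    ∃ g : ((Fin m → ℝ) × (ℝ × ℝ)) → (Fin (d + 1) → ℝ),
      IsPLOn g (K ×ˢ plCircle) ∧ InjOn g (K ×ˢ plCircle) := by
  obtain ⟨n, rfl⟩ : ∃ n, d = n + 1 := ⟨d - 1, by omega⟩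
  obtain ⟨f, hf, hf_inj⟩ := h
  obtain ⟨A, hA_inj, hA⟩ := hf.exists_injective_affineMap_fst_mem_Icc
  let L :=
    ((LinearEquiv.refl ℝ ℝ).prodCongr (Fin.consLinearEquiv ℝ fun _ : Fin (n + 1) => ℝ)).trans
      (Fin.consLinearEquiv ℝ fun _ : Fin (n + 1 + 1) => ℝ)
  refine ⟨L ∘ spin ∘ Prod.map (A ∘ f) id, ?_, ?_⟩
  · exact (isPLOn_spin_comp_prodMap (hf.affineMap_comp A) hA).affineMap_comp
      L.toLinearMap.toAffineMap
  · exact L.injective.comp_injOn <| spin_injOn.comp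
      ((hA_inj.comp_injOn hf_inj).prodMap (injOn_id _)) fun z hz => ⟨hA _ hz.1, hz.2⟩

/-- If a compact polyhedron `K ⊆ ℝ^m` embeds piecewise linearly into `ℝ^d` with `d > 0`,
then `K × S¹` embeds piecewise linearly into `ℝ^{d+1}`. -/
theorem prod_circle_embeds {m d : ℕ} (hd : 0 < d) (K : Set (Fin m → ℝ))
    (hK : IsPolyhedron K)
    (h : ∃ f : (Fin m → ℝ) → (Fin d → ℝ), IsPLOn f K ∧ InjOn f K) :
    ∃ g : ((Fin m → ℝ) × (ℝ × ℝ)) → (Fin (d + 1) → ℝ),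
      IsPLOn g (K ×ˢ plCircle) ∧ InjOn g (K ×ˢ plCircle) :=
  prod_circle_embeds_general hd K h
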